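/- arXiv:1601.06471 — 5 statements merged into one kernel-verified Lean document; each statement's English description precedes it below -/
import Mathlib

section
/- Let K be a field, n ≥ 1, and A ∈ K^{n×n}. The following three statements are equivalent: (i) A = F_p for some p ∈ K^n; (ii) R(A, g) = g(A) for all g ∈ K^n; (iii) R(A, e_0) = I_n. -/
open Matrix

/-- The second companion matrix `F_p` of `p ∈ K^{n+1}`: columns `0,…,n-1` are
`e_1,…,e_n` and the last column is `p`. -/
def companion {K : Type*} [Field K] {n : ℕ} (p : Fin (n + 1) → K) :
    Matrix (Fin (n + 1)) (Fin (n + 1)) K :=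
  Matrix.of fun i j => if j = Fin.last n then p i else if (i : ℕ) = (j : ℕ) + 1 then 1 else 0

/-- The reachability (Krylov) matrix `R(A, g) = [g, Ag, …, A^{n-1} g]`. -/
def krylov {K : Type*} [Field K] {n : ℕ} (A : Matrix (Fin n) (Fin n) K) (g : Fin n → K) :
    Matrix (Fin n) (Fin n) K :=
  Matrix.of fun i j => (A ^ (j : ℕ)).mulVec g i

/-- `b(A) = Σ_{i=0}^{n-1} b_i A^i`. -/
def polyEval {K : Type*} [Field K] {n : ℕ} (b : Fin n → K) (A : Matrix (Fin n) (Fin n) K) :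
    Matrix (Fin n) (Fin n) K :=
  ∑ i : Fin n, b i • A ^ (i : ℕ)

/-!
`R(A, e_0) = I` says exactly that `A^j e_0 = e_j` for `j ≤ n - 1`. For a companion matrix this
holds because `F_p` shifts `e_j` to `e_{j+1}`; conversely it forces `A e_j = A^{j+1} e_0 = e_{j+1}`
for `j < n - 1`, so `A = F_p` with `p = A e_{n-1}`. Moreover, if `R(A, v) = I` then `g(A) v = g`
for every `g`, and since `g(A)` commutes with the powers of `A`, the `j`-th column `A^j g` of
`R(A, g)` equals `g(A) A^j v = g(A) e_j`. Finally `R(A, e_0) = e_0(A) = I` recovers (iii) from (ii).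
-/

section Krylov

variable {K : Type*} [Field K] {n : ℕ}

lemma krylov_col (A : Matrix (Fin n) (Fin n) K) (g : Fin n → K) (j : Fin n) :
    (krylov A g).col j = A ^ (j : ℕ) *ᵥ g :=
  rfl

lemma krylov_eq_one_iff {A : Matrix (Fin n) (Fin n) K} {g : Fin n → K} :
    krylov A g = 1 ↔ ∀ j : Fin n, A ^ (j : ℕ) *ᵥ g = Pi.single j 1 := by
  refine ⟨fun h j => ?_, fun h => ext_col fun j => ?_⟩
  · rw [← krylov_col, h, ← mulVec_single_one, one_mulVec]
  · rw [krylov_col, h, ← mulVec_single_one, one_mulVec]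

lemma polyEval_mulVec (g : Fin n → K) (A : Matrix (Fin n) (Fin n) K) (v : Fin n → K) :
    polyEval g A *ᵥ v = ∑ i : Fin n, g i • (A ^ (i : ℕ) *ᵥ v) := by
  simp only [polyEval, sum_mulVec, smul_mulVec]

lemma polyEval_mulVec_of_krylov_eq_one {A : Matrix (Fin n) (Fin n) K} {v : Fin n → K}
    (h : krylov A v = 1) (g : Fin n → K) : polyEval g A *ᵥ v = g := by
  rw [polyEval_mulVec, pi_eq_sum_univ' g]
  simp only [krylov_eq_one_iff.mp h, ← pi_eq_sum_univ']

lemma commute_polyEval (g : Fin n → K) (A : Matrix (Fin n) (Fin n) K) :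
    Commute A (polyEval g A) :=
  Commute.sum_right _ _ _ fun _ _ => ((Commute.refl A).pow_right _).smul_right _

lemma krylov_eq_polyEval_of_krylov_eq_one {A : Matrix (Fin n) (Fin n) K} {v : Fin n → K}
    (h : krylov A v = 1) (g : Fin n → K) : krylov A g = polyEval g A := by
  refine ext_col fun j => ?_
  calc A ^ (j : ℕ) *ᵥ g = A ^ (j : ℕ) *ᵥ (polyEval g A *ᵥ v) := by
        rw [polyEval_mulVec_of_krylov_eq_one h g]
    _ = polyEval g A *ᵥ (A ^ (j : ℕ) *ᵥ v) := by
        rw [mulVec_mulVec, mulVec_mulVec, ((commute_polyEval g A).pow_left _).eq]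
    _ = (polyEval g A).col j := by rw [krylov_eq_one_iff.mp h, mulVec_single_one]

lemma polyEval_single_zero (A : Matrix (Fin (n + 1)) (Fin (n + 1)) K) :
    polyEval (Pi.single 0 1) A = 1 := by
  rw [polyEval, Fintype.sum_eq_single 0 fun _ hi => by simp [hi]]
  simp

lemma companion_mulVec_single_castSucc (p : Fin (n + 1) → K) (j : Fin n) :
    companion p *ᵥ Pi.single j.castSucc 1 = Pi.single j.succ 1 := by
  ext i
  simp [companion, j.isLt.ne, Pi.single_apply, Fin.ext_iff]

lemma companion_mulVec_single_last (p : Fin (n + 1) → K) :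
    companion p *ᵥ Pi.single (Fin.last n) 1 = p := by
  ext i
  simp [companion]

lemma companion_pow_mulVec_single_zero (p : Fin (n + 1) → K) (j : Fin (n + 1)) :
    companion p ^ (j : ℕ) *ᵥ Pi.single 0 1 = Pi.single j 1 := by
  induction j using Fin.induction with
  | zero => rw [Fin.val_zero, pow_zero, one_mulVec]
  | succ j ih =>
    rw [Fin.val_succ, pow_succ', ← mulVec_mulVec, ← Fin.val_castSucc, ih,
      companion_mulVec_single_castSucc]

lemma krylov_companion_single_zero (p : Fin (n + 1) → K) :
    krylov (companion p) (Pi.single 0 1) = 1 :=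
  krylov_eq_one_iff.mpr (companion_pow_mulVec_single_zero p)

lemma eq_companion_of_krylov_eq_one {A : Matrix (Fin (n + 1)) (Fin (n + 1)) K}
    (h : krylov A (Pi.single 0 1) = 1) : A = companion (A *ᵥ Pi.single (Fin.last n) 1) := by
  have hpow := krylov_eq_one_iff.mp h
  refine ext_col fun j => ?_
  rw [← mulVec_single_one, ← mulVec_single_one]
  induction j using Fin.lastCases with
  | last => rw [companion_mulVec_single_last]
  | cast j =>
    rw [companion_mulVec_single_castSucc, ← hpow j.castSucc, ← hpow j.succ, mulVec_mulVec,
      ← pow_succ', Fin.val_succ, Fin.val_castSucc]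

end Krylov

/-- Lemma 1: for `A ∈ K^{n×n}` (with `n ≥ 1`), the following are equivalent:
(i) `A = F_p` for some `p`; (ii) `R(A,g) = g(A)` for all `g`; (iii) `R(A, e_0) = I_n`. -/
theorem companion_tfae {K : Type*} [Field K] {n : ℕ}
    (A : Matrix (Fin (n + 1)) (Fin (n + 1)) K) :
    [(∃ p : Fin (n + 1) → K, A = companion p),
     (∀ g : Fin (n + 1) → K, krylov A g = polyEval g A),
     (krylov A (Pi.single (0 : Fin (n + 1)) (1 : K)) = 1)].TFAE := by
  tfae_have 1 → 3 := fun ⟨p, hp⟩ => hp ▸ krylov_companion_single_zero p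
  tfae_have 3 → 1 := fun h => ⟨_, eq_companion_of_krylov_eq_one h⟩
  tfae_have 3 → 2 := krylov_eq_polyEval_of_krylov_eq_one
  tfae_have 2 → 3 := fun h => (h _).trans (polyEval_single_zero A)
  tfae_finish
end

section
/- Let K be a field, n ≥ 1, and p ∈ K^n. Then the bilinear map (b, g) ↦ u(F_p; b, g) is symmetric: for all b, g ∈ K^n and every k = 0, …, n-1 one has e_{n-1}^T (Σ_{j=k}^{n-1} b_j F_p^{j-k}) g = e_{n-1}^T (Σ_{j=k}^{n-1} g_j F_p^{j-k}) b. -/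
open Matrix

/-- The bilinear map `u(A; b, g)` with `k`-th component
`e_{n-1}^T (Σ_{j=k}^{n-1} b_j A^{j-k}) g`. -/
def ubil {K : Type*} [Field K] {n : ℕ} (A : Matrix (Fin (n + 1)) (Fin (n + 1)) K)
    (b g : Fin (n + 1) → K) : Fin (n + 1) → K :=
  fun k => ∑ j : Fin (n + 1),
    if (k : ℕ) ≤ (j : ℕ) then b j * (A ^ ((j : ℕ) - (k : ℕ))).mulVec g (Fin.last n) else 0

/-!
Writing `u(A; b, g)_k = Σ_{j,i} b_j c_k(j, i) g_i`, symmetry of `u` amounts to symmetry of the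
kernel `c_k(j, i) = [k ≤ j] (A^{j-k})_{n,i}`. For the companion matrix `F = F_p` one has
`F^i e_0 = e_i` for `i ≤ n`, so `(F^m)_{n,i} = (F^{m+i})_{n,0}`, which vanishes for `m + i < n`.
Hence `c_k(j, i) = [k ≤ j ∧ k ≤ i] (F^{i+j-k})_{n,0}`, which is visibly symmetric: when `i < k ≤ j`
the exponent `j - k + i` is below `n`.
-/

section Kernel

variable {K : Type*} [Field K] {n : ℕ}

def ubilKernel (A : Matrix (Fin (n + 1)) (Fin (n + 1)) K) (k j i : Fin (n + 1)) : K :=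
  if (k : ℕ) ≤ j then (A ^ ((j : ℕ) - k)) (Fin.last n) i else 0

theorem ubil_apply_eq_sum_ubilKernel (A : Matrix (Fin (n + 1)) (Fin (n + 1)) K)
    (b g : Fin (n + 1) → K) (k : Fin (n + 1)) :
    ubil A b g k = ∑ j, ∑ i, b j * ubilKernel A k j i * g i := by
  refine Finset.sum_congr rfl fun j _ => ?_
  unfold ubilKernel
  split_ifs
  · simp only [mulVec, dotProduct, Finset.mul_sum, mul_assoc]
  · simp

theorem ubil_apply_comm_of_ubilKernel_symm {A : Matrix (Fin (n + 1)) (Fin (n + 1)) K}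
    {k : Fin (n + 1)} (hA : ∀ j i, ubilKernel A k j i = ubilKernel A k i j)
    (b g : Fin (n + 1) → K) : ubil A b g k = ubil A g b k := by
  rw [ubil_apply_eq_sum_ubilKernel, ubil_apply_eq_sum_ubilKernel, Finset.sum_comm]
  refine Finset.sum_congr rfl fun i _ => Finset.sum_congr rfl fun j _ => ?_
  rw [hA]
  ring

end Kernel

section Companion

variable {K : Type*} [Field K] {n : ℕ} (p : Fin (n + 1) → K)

theorem companion_pow_apply_zero {i : ℕ} (hi : i ≤ n) (j : Fin (n + 1)) :
    (companion p ^ i) j 0 = if (j : ℕ) = i then 1 else 0 := by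
  induction i generalizing j with
  | zero =>
    simp only [pow_zero, one_apply, Fin.ext_iff, Fin.val_zero]
  | succ i ih =>
    have hlt : i < n + 1 := by omega
    rw [pow_succ', mul_apply, Finset.sum_eq_single ⟨i, hlt⟩]
    · have hne : (⟨i, hlt⟩ : Fin (n + 1)) ≠ Fin.last n := by simp [Fin.ext_iff]; omega
      rw [ih (by omega)]
      simp [companion, hne]
    · intro l _ hl
      simp [ih (by omega), Fin.ext_iff.not.mp hl]
    · simp

theorem companion_pow_last_apply (m : ℕ) (i : Fin (n + 1)) :
    (companion p ^ m) (Fin.last n) i = (companion p ^ (m + i)) (Fin.last n) 0 := by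
  rw [pow_add, mul_apply, Finset.sum_eq_single i]
  · simp [companion_pow_apply_zero p (Nat.lt_succ_iff.mp i.isLt)]
  · intro l _ hl
    simp [companion_pow_apply_zero p (Nat.lt_succ_iff.mp i.isLt), Fin.val_ne_of_ne hl]
  · simp

theorem companion_pow_last_zero_of_lt {m : ℕ} (hm : m < n) :
    (companion p ^ m) (Fin.last n) 0 = 0 := by
  simp [companion_pow_apply_zero p hm.le, hm.ne']

theorem ubilKernel_companion (k j i : Fin (n + 1)) :
    ubilKernel (companion p) k j i =
      if (k : ℕ) ≤ j ∧ (k : ℕ) ≤ i then (companion p ^ ((j + i : ℕ) - k)) (Fin.last n) 0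
      else 0 := by
  unfold ubilKernel
  rw [companion_pow_last_apply]
  by_cases hj : (k : ℕ) ≤ j <;> by_cases hi : (k : ℕ) ≤ i
  · simp only [hj, hi, and_self, if_true]
    rw [show (j : ℕ) - k + i = j + i - k by omega]
  · have : (j : ℕ) - k + i < n := by have := j.isLt; omega
    simp [hj, hi, companion_pow_last_zero_of_lt p this]
  · simp [hj]
  · simp [hj]

end Companion

/-- The bilinear map `(b, g) ↦ u(F_p; b, g)` is symmetric. -/
theorem ubil_companion_symm {K : Type*} [Field K] {n : ℕ} (p : Fin (n + 1) → K)
    (b g : Fin (n + 1) → K) :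
    ubil (companion p) b g = ubil (companion p) g b := by
  funext k
  refine ubil_apply_comm_of_ubilKernel_symm (fun j i => ?_) b g
  simp only [ubilKernel_companion, Nat.add_comm (j : ℕ), and_comm]
end

section
/- Let K be a field, n, t ≥ 1, and A ∈ K^{nt×nt}. The following four statements are equivalent: (i) A = F_P for some P ∈ K^{nt×t}; (ii) R(A, E_0) = I_{nt}; (iii) R(A, G) = G(A) for all m ≥ 1 and all G ∈ K^{nt×m}; (iv) the identity [B, AB, …, A^{n-1} B] G = [G, AG, …, A^{n-1} G] B holds for all blockwise commuting B, G ∈ K^{nt×t}. -/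
open Matrix

/-- The second block companion matrix `F_P` associated with the stacked blocks
`P = [P_0; …; P_{n-1}] ∈ K^{nt×t}`: the `(i,j)` block (of size `t×t`) is `I_t` if
`i = j+1`, `P_i` if `j = n-1`, and `0` otherwise. -/
def bcompanion {K : Type*} [Field K] {n t : ℕ}
    (P : Matrix (Fin (n + 1) × Fin t) (Fin t) K) :
    Matrix (Fin (n + 1) × Fin t) (Fin (n + 1) × Fin t) K :=
  Matrix.of fun r s =>
    if s.1 = Fin.last n then P r s.2
    else if (r.1 : ℕ) = (s.1 : ℕ) + 1 ∧ r.2 = s.2 then 1 else 0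

/-- The `n`-step reachability matrix `R(A, G) = [G, AG, …, A^{n-1} G] ∈ K^{nt×nm}`. -/
def bkrylov {K : Type*} [Field K] {n t m : ℕ}
    (A : Matrix (Fin (n + 1) × Fin t) (Fin (n + 1) × Fin t) K)
    (G : Matrix (Fin (n + 1) × Fin t) (Fin m) K) :
    Matrix (Fin (n + 1) × Fin t) (Fin (n + 1) × Fin m) K :=
  Matrix.of fun r s => (A ^ (s.1 : ℕ) * G) r s.2

/-- `E_i = e_i ⊗ I_t ∈ K^{nt×t}`. -/
def Eblk {K : Type*} [Field K] {n t : ℕ} (i : Fin (n + 1)) :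
    Matrix (Fin (n + 1) × Fin t) (Fin t) K :=
  Matrix.of fun r c => if r.1 = i ∧ r.2 = c then 1 else 0

/-- `I_n ⊗ G_i ∈ K^{nt×nm}`, where `G_i` is the `i`-th block of
`G = [G_0; …; G_{n-1}] ∈ K^{nt×m}`. -/
def blockDiag {K : Type*} [Field K] {n t m : ℕ}
    (G : Matrix (Fin (n + 1) × Fin t) (Fin m) K) (i : Fin (n + 1)) :
    Matrix (Fin (n + 1) × Fin t) (Fin (n + 1) × Fin m) K :=
  Matrix.of fun r s => if r.1 = s.1 then G (i, r.2) s.2 else 0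

/-- The operator substitution `G(A) = Σ_{i=0}^{n-1} A^i (I_n ⊗ G_i) ∈ K^{nt×nm}`. -/
def bpolyEval {K : Type*} [Field K] {n t m : ℕ}
    (G : Matrix (Fin (n + 1) × Fin t) (Fin m) K)
    (A : Matrix (Fin (n + 1) × Fin t) (Fin (n + 1) × Fin t) K) :
    Matrix (Fin (n + 1) × Fin t) (Fin (n + 1) × Fin m) K :=
  ∑ i : Fin (n + 1), A ^ (i : ℕ) * blockDiag G i

/-- The `i`-th block `B_i ∈ K^{t×t}` of a stacked matrix `B = [B_0; …; B_{n-1}]`. -/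
def blk {K : Type*} [Field K] {n t : ℕ} (B : Matrix (Fin (n + 1) × Fin t) (Fin t) K)
    (i : Fin (n + 1)) : Matrix (Fin t) (Fin t) K :=
  Matrix.of fun a b => B (i, a) b

/-- `B` and `G` are blockwise commuting: `B_i G_j = G_j B_i` for all `i, j`. -/
def BlockwiseComm {K : Type*} [Field K] {n t : ℕ}
    (B G : Matrix (Fin (n + 1) × Fin t) (Fin t) K) : Prop :=
  ∀ i j : Fin (n + 1), blk B i * blk G j = blk G j * blk B i

/-!
Write `E_s` for the block unit vectors. Condition (ii) says exactly that `A^s E_0 = E_s` for every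
block index `s`; since the powers of `A` commute, this yields the exchange rule
`A^s E_i = A^i E_s`, which turns `A^s G = Σ_i A^s E_i G_i` into the `s`-th column block of `G(A)`,
giving (iii). Under blockwise commutation `(I ⊗ B_i) G = G B_i`, so (iii) gives (iv), and
testing (iv) on `B = E_0`, `G = E_s` recovers `A^s E_0 = E_s`. Finally `A^s E_0 = E_s` fixes every
column block of `A` except the last one to be the shift `E_j ↦ E_{j+1}`, which is the shape of
`F_P` with `P` the last column block of `A`.
-/

namespace BlockCompanion

section Blocks

variable {R α β γ ι : Type*}

def colBlock (M : Matrix α (ι × β) R) (s : ι) : Matrix α β R :=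
  Matrix.of fun r c => M r (s, c)

def rowBlock (G : Matrix (ι × β) γ R) (i : ι) : Matrix β γ R :=
  Matrix.of fun a c => G (i, a) c

theorem colBlock_ext {M N : Matrix α (ι × β) R} (h : ∀ s, colBlock M s = colBlock N s) :
    M = N := by
  ext r ⟨s, c⟩
  exact congrFun (congrFun (h s) r) c

theorem colBlock_mul [Fintype γ] [NonUnitalNonAssocSemiring R] (X : Matrix α γ R)
    (Y : Matrix γ (ι × β) R) (s : ι) : colBlock (X * Y) s = X * colBlock Y s :=
  rfl

theorem colBlock_sum [AddCommMonoid R] {κ : Type*} (S : Finset κ)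
    (f : κ → Matrix α (ι × β) R) (s : ι) :
    colBlock (∑ k ∈ S, f k) s = ∑ k ∈ S, colBlock (f k) s := by
  ext r c
  simp [colBlock, Matrix.sum_apply]

end Blocks

variable {K : Type*} [Field K] {n t m : ℕ}

-- `Eblk` is given its type explicitly in products: left to unification, `*` elaborates through
-- the `CStarMatrix` instance and `Matrix.mul_assoc` etc. no longer rewrite.

theorem colBlock_bkrylov (A : Matrix (Fin (n + 1) × Fin t) (Fin (n + 1) × Fin t) K)
    (G : Matrix (Fin (n + 1) × Fin t) (Fin m) K) (s : Fin (n + 1)) :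
    colBlock (bkrylov A G) s = A ^ (s : ℕ) * G :=
  rfl

theorem colBlock_one (s : Fin (n + 1)) :
    colBlock (1 : Matrix (Fin (n + 1) × Fin t) (Fin (n + 1) × Fin t) K) s = Eblk s := by
  ext r c
  simp [colBlock, Eblk, one_apply, Prod.ext_iff]

theorem colBlock_blockDiag (G : Matrix (Fin (n + 1) × Fin t) (Fin m) K) (i s : Fin (n + 1)) :
    colBlock (blockDiag G i) s = Eblk (K := K) (t := t) s * rowBlock G i := by
  ext ⟨j, a⟩ c
  simp [colBlock, _root_.blockDiag, Eblk, rowBlock, mul_apply, ite_and]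

theorem mul_Eblk {α : Type*} (M : Matrix α (Fin (n + 1) × Fin t) K) (j : Fin (n + 1)) :
    M * Eblk (K := K) (t := t) j = colBlock M j := by
  ext r c
  simp [colBlock, Eblk, mul_apply, Fintype.sum_prod_type, ite_and, mul_ite]

theorem sum_Eblk_mul_rowBlock (G : Matrix (Fin (n + 1) × Fin t) (Fin m) K) :
    ∑ i, Eblk (K := K) (t := t) i * rowBlock G i = G := by
  ext ⟨j, a⟩ c
  simp [Matrix.sum_apply, Eblk, rowBlock, mul_apply, ite_and]

theorem mul_eq_sum_colBlock_mul_rowBlock {α : Type*} (M : Matrix α (Fin (n + 1) × Fin t) K)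
    (G : Matrix (Fin (n + 1) × Fin t) (Fin m) K) :
    M * G = ∑ i, colBlock M i * rowBlock G i := by
  conv_lhs => rw [← sum_Eblk_mul_rowBlock G, Matrix.mul_sum]
  simp only [← Matrix.mul_assoc, mul_Eblk]

theorem bkrylov_mul_Eblk (A : Matrix (Fin (n + 1) × Fin t) (Fin (n + 1) × Fin t) K)
    (G : Matrix (Fin (n + 1) × Fin t) (Fin t) K) (j : Fin (n + 1)) :
    bkrylov A G * Eblk (K := K) (t := t) j = A ^ (j : ℕ) * G := by
  rw [mul_Eblk, colBlock_bkrylov]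

theorem blockwiseComm_Eblk (i j : Fin (n + 1)) :
    BlockwiseComm (Eblk i : Matrix (Fin (n + 1) × Fin t) (Fin t) K) (Eblk j) := by
  have blk_Eblk : ∀ k l : Fin (n + 1),
      blk (Eblk l : Matrix (Fin (n + 1) × Fin t) (Fin t) K) k = if k = l then 1 else 0 := by
    intro k l
    ext a b
    by_cases h : k = l <;> simp [blk, Eblk, one_apply, h]
  intro k l
  simp only [blk_Eblk]
  split_ifs <;> simp

theorem bcompanion_mul_Eblk_castSucc (P : Matrix (Fin (n + 1) × Fin t) (Fin t) K) (j : Fin n) :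
    bcompanion P * Eblk (K := K) (t := t) j.castSucc = Eblk j.succ := by
  rw [mul_Eblk]
  ext ⟨i, a⟩ c
  simp [colBlock, bcompanion, Eblk, Fin.ext_iff, j.isLt.ne]

theorem bcompanion_pow_mul_Eblk_zero (P : Matrix (Fin (n + 1) × Fin t) (Fin t) K)
    (s : Fin (n + 1)) :
    bcompanion P ^ (s : ℕ) * Eblk (K := K) (t := t) (0 : Fin (n + 1)) = Eblk s := by
  induction s using Fin.induction with
  | zero => simp
  | succ j ih =>
    rw [Fin.val_succ, pow_succ', Matrix.mul_assoc, ← Fin.val_castSucc, ih,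
      bcompanion_mul_Eblk_castSucc]

theorem bkrylov_Eblk_zero_eq_one_iff (A : Matrix (Fin (n + 1) × Fin t) (Fin (n + 1) × Fin t) K) :
    bkrylov A (Eblk (0 : Fin (n + 1))) = 1 ↔
      ∀ s : Fin (n + 1), A ^ (s : ℕ) * Eblk (K := K) (t := t) (0 : Fin (n + 1)) = Eblk s := by
  refine ⟨fun h s => ?_, fun h => colBlock_ext fun s => ?_⟩
  · rw [← colBlock_bkrylov, h, colBlock_one]
  · rw [colBlock_bkrylov, colBlock_one, h]

section ShiftsUnitBlocks

variable {A : Matrix (Fin (n + 1) × Fin t) (Fin (n + 1) × Fin t) K}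
  (hA : ∀ s : Fin (n + 1), A ^ (s : ℕ) * Eblk (K := K) (t := t) (0 : Fin (n + 1)) = Eblk s)
include hA

theorem pow_mul_Eblk_comm (s i : Fin (n + 1)) :
    A ^ (s : ℕ) * Eblk (K := K) (t := t) i = A ^ (i : ℕ) * Eblk (K := K) (t := t) s := by
  rw [← hA i, ← hA s, ← Matrix.mul_assoc, ← Matrix.mul_assoc, ← pow_add, ← pow_add,
    Nat.add_comm (s : ℕ)]

theorem bkrylov_eq_bpolyEval (G : Matrix (Fin (n + 1) × Fin t) (Fin m) K) :
    bkrylov A G = bpolyEval G A := by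
  refine colBlock_ext fun s => ?_
  calc colBlock (bkrylov A G) s
      = A ^ (s : ℕ) * ∑ i, Eblk (K := K) (t := t) i * rowBlock G i := by
        rw [colBlock_bkrylov, sum_Eblk_mul_rowBlock]
    _ = ∑ i : Fin (n + 1), A ^ (i : ℕ) * (Eblk (K := K) (t := t) s * rowBlock G i) := by
        simp only [Matrix.mul_sum, ← Matrix.mul_assoc, pow_mul_Eblk_comm hA]
    _ = colBlock (bpolyEval G A) s := by
        simp only [bpolyEval, colBlock_sum, colBlock_mul, colBlock_blockDiag]

theorem eq_bcompanion_colBlock_last : A = bcompanion (colBlock A (Fin.last n)) := by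
  refine colBlock_ext fun j => ?_
  induction j using Fin.lastCases with
  | last =>
    ext r c
    simp [colBlock, bcompanion]
  | cast j =>
    rw [← mul_Eblk, ← mul_Eblk, bcompanion_mul_Eblk_castSucc, ← hA j.castSucc, ← hA j.succ,
      ← Matrix.mul_assoc, ← pow_succ', Fin.val_succ, Fin.val_castSucc]

end ShiftsUnitBlocks

theorem blockDiag_mul_of_blockwiseComm {B G : Matrix (Fin (n + 1) × Fin t) (Fin t) K}
    (hBG : BlockwiseComm B G) (i : Fin (n + 1)) : blockDiag B i * G = G * blk B i := by
  rw [mul_eq_sum_colBlock_mul_rowBlock]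
  conv_rhs => rw [← sum_Eblk_mul_rowBlock G, Matrix.sum_mul]
  refine Finset.sum_congr rfl fun j _ => ?_
  rw [colBlock_blockDiag, Matrix.mul_assoc, Matrix.mul_assoc]
  exact congrArg _ (hBG i j)

theorem bpolyEval_mul_of_blockwiseComm (A : Matrix (Fin (n + 1) × Fin t) (Fin (n + 1) × Fin t) K)
    {B G : Matrix (Fin (n + 1) × Fin t) (Fin t) K} (hBG : BlockwiseComm B G) :
    bpolyEval B A * G = bkrylov A G * B := by
  rw [bpolyEval, Matrix.sum_mul, mul_eq_sum_colBlock_mul_rowBlock]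
  refine Finset.sum_congr rfl fun i _ => ?_
  rw [Matrix.mul_assoc, blockDiag_mul_of_blockwiseComm hBG, ← Matrix.mul_assoc]
  rfl

end BlockCompanion

open BlockCompanion

/-- Theorem 5: for `A ∈ K^{nt×nt}` the following are equivalent:
(i) `A = F_P` for some `P ∈ K^{nt×t}`; (ii) `R(A, E_0) = I_{nt}`;
(iii) `R(A, G) = G(A)` for all `G ∈ K^{nt×m}` (`m ≥ 1`);
(iv) `[B, AB, …, A^{n-1}B] G = [G, AG, …, A^{n-1}G] B` for all blockwise
commuting `B, G ∈ K^{nt×t}`. -/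
theorem bcompanion_tfae {K : Type*} [Field K] {n t : ℕ} (ht : 0 < t)
    (A : Matrix (Fin (n + 1) × Fin t) (Fin (n + 1) × Fin t) K) :
    [(∃ P : Matrix (Fin (n + 1) × Fin t) (Fin t) K, A = bcompanion P),
     (bkrylov A (Eblk (0 : Fin (n + 1))) = 1),
     (∀ m : ℕ, 0 < m → ∀ G : Matrix (Fin (n + 1) × Fin t) (Fin m) K,
        bkrylov A G = bpolyEval G A),
     (∀ B G : Matrix (Fin (n + 1) × Fin t) (Fin t) K, BlockwiseComm B G →
        bkrylov A B * G = bkrylov A G * B)].TFAE := by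
  tfae_have 1 → 2 := by
    rintro ⟨P, rfl⟩
    exact (bkrylov_Eblk_zero_eq_one_iff _).2 (bcompanion_pow_mul_Eblk_zero P)
  tfae_have 2 → 3 := fun h _ _ G => bkrylov_eq_bpolyEval ((bkrylov_Eblk_zero_eq_one_iff A).1 h) G
  tfae_have 3 → 4 := fun h B G hBG => by
    rw [h t ht B]
    exact bpolyEval_mul_of_blockwiseComm A hBG
  tfae_have 4 → 2 := fun h => (bkrylov_Eblk_zero_eq_one_iff A).2 fun s => by
    simpa [bkrylov_mul_Eblk] using h _ _ (blockwiseComm_Eblk 0 s)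
  tfae_have 2 → 1 := fun h =>
    ⟨_, eq_bcompanion_colBlock_last ((bkrylov_Eblk_zero_eq_one_iff A).1 h)⟩
  tfae_finish
end

section
/- Let K be a field, n, t ≥ 1, and P ∈ K^{nt×t}. Then for every m ≥ 1 and every G ∈ K^{nt×m} one has R(F_P, G) = G(F_P). -/
open Matrix

section Aux

variable {K : Type*} [Field K] {n t : ℕ}

lemma mul_Eblk_apply (B : Matrix (Fin (n+1) × Fin t) (Fin (n+1) × Fin t) K)
    (j : Fin (n+1)) (r : Fin (n+1) × Fin t) (a : Fin t) :
    (B * (Eblk j : Matrix (Fin (n+1) × Fin t) (Fin t) K)) r a = B r (j, a) := by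
  classical
  simp only [mul_apply, Eblk, of_apply, mul_ite, mul_one, mul_zero]
  rw [show (∑ s : Fin (n+1) × Fin t, if s.1 = j ∧ s.2 = a then B r s else 0)
      = ∑ s : Fin (n+1) × Fin t, if s = (j, a) then B r s else 0 from
    Finset.sum_congr rfl (fun s _ => by
      by_cases h : s = (j, a)
      · simp [h]
      · rw [if_neg h, if_neg]
        simpa [Prod.ext_iff] using h)]
  simp

/-- Auxiliary sequence: `g k = E_k` for `k ≤ n`, and `A^(k-n-1) P` for `k > n`. -/
noncomputable def gfun (P : Matrix (Fin (n + 1) × Fin t) (Fin t) K) (k : ℕ) :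
    Matrix (Fin (n + 1) × Fin t) (Fin t) K :=
  if h : k ≤ n then Eblk ⟨k, Nat.lt_succ_of_le h⟩ else (bcompanion P) ^ (k - n - 1) * P

lemma gfun_of_le (P : Matrix (Fin (n + 1) × Fin t) (Fin t) K) {k : ℕ} (h : k ≤ n) :
    gfun P k = Eblk ⟨k, Nat.lt_succ_of_le h⟩ := dif_pos h

lemma gfun_of_gt (P : Matrix (Fin (n + 1) × Fin t) (Fin t) K) {k : ℕ} (h : n < k) :
    gfun P k = (bcompanion P) ^ (k - n - 1) * P := dif_neg (by omega)

lemma gfun_step (P : Matrix (Fin (n + 1) × Fin t) (Fin t) K) (k : ℕ) :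
    bcompanion P * gfun P k = gfun P (k + 1) := by
  classical
  rcases lt_trichotomy k n with hlt | heq | hgt
  · -- k < n
    rw [gfun_of_le P hlt.le, gfun_of_le P (show k + 1 ≤ n from hlt)]
    ext r a
    rw [mul_Eblk_apply]
    have hne : (⟨k, Nat.lt_succ_of_le hlt.le⟩ : Fin (n+1)) ≠ Fin.last n := by
      simp only [ne_eq, Fin.ext_iff, Fin.last]
      omega
    simp only [bcompanion, Eblk, of_apply, if_neg hne]
    simp [Fin.ext_iff]
  · -- k = n
    rw [gfun_of_le P heq.le, gfun_of_gt P (by omega)]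
    have h0 : k + 1 - n - 1 = 0 := by omega
    rw [h0, pow_zero, Matrix.one_mul]
    ext r a
    rw [mul_Eblk_apply]
    have hl : (⟨k, Nat.lt_succ_of_le heq.le⟩ : Fin (n+1)) = Fin.last n := by
      simp [Fin.ext_iff, Fin.last, heq]
    simp [bcompanion, hl]
  · rw [gfun_of_gt P (by omega), gfun_of_gt P (by omega), ← Matrix.mul_assoc,
      ← pow_succ']
    congr 2
    omega

lemma pow_mul_gfun (P : Matrix (Fin (n + 1) × Fin t) (Fin t) K) (i k : ℕ) :
    (bcompanion P) ^ i * gfun P k = gfun P (i + k) := by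
  induction i with
  | zero => simp
  | succ i ih =>
    rw [show i + 1 + k = i + k + 1 from by omega, pow_succ', Matrix.mul_assoc, ih,
      gfun_step]

lemma Eblk_eq_gfun (P : Matrix (Fin (n + 1) × Fin t) (Fin t) K) (j : Fin (n + 1)) :
    Eblk j = gfun P (j : ℕ) := by
  rw [gfun_of_le P (Nat.lt_succ_iff.mp j.isLt)]

lemma pow_apply_symm (P : Matrix (Fin (n + 1) × Fin t) (Fin t) K)
    (i j : Fin (n + 1)) (r : Fin (n + 1) × Fin t) (a : Fin t) :
    ((bcompanion P) ^ (i : ℕ)) r (j, a) = ((bcompanion P) ^ (j : ℕ)) r (i, a) := by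
  have h1 := mul_Eblk_apply ((bcompanion P) ^ (i : ℕ)) j r a
  have h2 := mul_Eblk_apply ((bcompanion P) ^ (j : ℕ)) i r a
  rw [← h1, ← h2, Eblk_eq_gfun P j, Eblk_eq_gfun P i, pow_mul_gfun, pow_mul_gfun,
    Nat.add_comm]

end Aux

/-- For every `P`, every `m ≥ 1` and every `G ∈ K^{nt×m}`, `R(F_P, G) = G(F_P)`. -/
theorem bkrylov_bcompanion_eq_bpolyEval {K : Type*} [Field K] {n t : ℕ} (ht : 0 < t)
    (P : Matrix (Fin (n + 1) × Fin t) (Fin t) K) :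
    ∀ m : ℕ, 0 < m → ∀ G : Matrix (Fin (n + 1) × Fin t) (Fin m) K,
      bkrylov (bcompanion P) G = bpolyEval G (bcompanion P) := by
  intro m hm G
  ext r s
  obtain ⟨j, c⟩ := s
  show (bcompanion P ^ (j : ℕ) * G) r c = bpolyEval G (bcompanion P) r (j, c)
  rw [bpolyEval, Matrix.sum_apply, mul_apply]
  conv_lhs => rw [Fintype.sum_prod_type]
  refine Finset.sum_congr rfl fun i _ => ?_
  rw [mul_apply, Fintype.sum_prod_type]
  simp only [_root_.blockDiag, of_apply, mul_ite, mul_zero, Finset.sum_ite_irrel,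
    Finset.sum_const_zero, Finset.sum_ite_eq', Finset.mem_univ, if_true]
  refine Finset.sum_congr rfl fun a _ => ?_
  rw [pow_apply_symm]
end

section
/- Let K be a field, n, t ≥ 1, and P ∈ K^{nt×t}. Then for all blockwise commuting B, G ∈ K^{nt×t} one has [B, F_P B, …, F_P^{n-1} B] G = [G, F_P G, …, F_P^{n-1} G] B. -/
open Matrix

/-!
Writing `B = Σᵢ Eᵢ Bᵢ` and using `F_P^i E₀ = Eᵢ`, the product `[B, F_P B, …] G = Σⱼ F_P^j B Gⱼ`
becomes `Σᵢ Σⱼ F_P^(i+j) E₀ Bᵢ Gⱼ`, which is symmetric under exchanging `B` and `G` once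
`Bᵢ Gⱼ = Gⱼ Bᵢ`.
-/

section BlockCompanion

variable {K : Type*} [Field K] {n t : ℕ}

lemma bkrylov_mul (A : Matrix (Fin (n + 1) × Fin t) (Fin (n + 1) × Fin t) K)
    (B G : Matrix (Fin (n + 1) × Fin t) (Fin t) K) :
    bkrylov A B * G = ∑ j : Fin (n + 1), A ^ (j : ℕ) * B * blk G j := by
  ext ⟨r₁, r₂⟩ c
  simp only [mul_apply, bkrylov, blk, Matrix.sum_apply, of_apply, Fintype.sum_prod_type]

lemma sum_Eblk_mul_blk (B : Matrix (Fin (n + 1) × Fin t) (Fin t) K) :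
    ∑ i : Fin (n + 1), (Eblk i : Matrix (Fin (n + 1) × Fin t) (Fin t) K) * blk B i = B := by
  ext ⟨r₁, r₂⟩ c
  simp [Eblk, blk, Matrix.sum_apply, mul_apply, ite_and, Finset.sum_ite_eq]

lemma bcompanion_mul_Eblk_castSucc (P : Matrix (Fin (n + 1) × Fin t) (Fin t) K) (i : Fin n) :
    bcompanion P * (Eblk i.castSucc : Matrix (Fin (n + 1) × Fin t) (Fin t) K) = Eblk i.succ := by
  ext ⟨r₁, r₂⟩ c
  simp only [mul_apply, Eblk, of_apply, Fintype.sum_prod_type, ite_and, mul_ite, mul_one,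
    mul_zero]
  rw [Finset.sum_comm]
  simp only [Finset.sum_ite_eq', Finset.mem_univ, if_true, bcompanion, of_apply,
    if_neg (Fin.castSucc_ne_last i)]
  simp [Fin.ext_iff, ite_and]

lemma bcompanion_pow_mul_Eblk_zero (P : Matrix (Fin (n + 1) × Fin t) (Fin t) K)
    (i : Fin (n + 1)) :
    bcompanion P ^ (i : ℕ) * (Eblk 0 : Matrix (Fin (n + 1) × Fin t) (Fin t) K) = Eblk i := by
  induction i using Fin.induction with
  | zero => simp
  | succ i ih =>
    rw [Fin.val_succ, pow_succ', Matrix.mul_assoc, ← Fin.val_castSucc, ih]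
    exact bcompanion_mul_Eblk_castSucc P i

lemma bkrylov_bcompanion_mul (P B G : Matrix (Fin (n + 1) × Fin t) (Fin t) K) :
    bkrylov (bcompanion P) B * G =
      ∑ j : Fin (n + 1), ∑ i : Fin (n + 1),
        bcompanion P ^ ((i : ℕ) + j) * (Eblk 0 : Matrix (Fin (n + 1) × Fin t) (Fin t) K) *
          (blk B i * blk G j) := by
  rw [bkrylov_mul]
  refine Finset.sum_congr rfl fun j _ => ?_
  conv_lhs => rw [← sum_Eblk_mul_blk B, Matrix.mul_sum, Matrix.sum_mul]
  refine Finset.sum_congr rfl fun i _ => ?_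
  rw [← bcompanion_pow_mul_Eblk_zero P i, add_comm (i : ℕ), pow_add]
  simp only [Matrix.mul_assoc]

end BlockCompanion

theorem bcompanion_blockwise_symm_general {K : Type*} [Field K] {n t : ℕ}
    (P B G : Matrix (Fin (n + 1) × Fin t) (Fin t) K) (hBG : BlockwiseComm B G) :
    bkrylov (bcompanion P) B * G = bkrylov (bcompanion P) G * B := by
  rw [bkrylov_bcompanion_mul, bkrylov_bcompanion_mul, Finset.sum_comm]
  refine Finset.sum_congr rfl fun j _ => Finset.sum_congr rfl fun i _ => ?_
  rw [hBG j i, add_comm (j : ℕ)]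

/-- For all blockwise commuting `B, G ∈ K^{nt×t}`,
`[B, F_P B, …, F_P^{n-1} B] G = [G, F_P G, …, F_P^{n-1} G] B`. -/
theorem bcompanion_blockwise_symm {K : Type*} [Field K] {n t : ℕ} (ht : 0 < t)
    (P B G : Matrix (Fin (n + 1) × Fin t) (Fin t) K) (hBG : BlockwiseComm B G) :
    bkrylov (bcompanion P) B * G = bkrylov (bcompanion P) G * B :=
  bcompanion_blockwise_symm_general P B G hBG
end
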